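/- arXiv:math/0210390 — 2 statements merged into one kernel-verified Lean document; each statement's English description precedes it below -/
import Mathlib

section
/- Let $K$ be a number field that is Galois over $\mathbb{Q}$ with Galois group $G$, let $p$ be a rational prime that splits completely in $K$, let $\wp$ be a maximal ideal of $\mathcal{O}_K$ lying above $p$, and let $r \in \mathcal{O}_K$ be such that the image of $r$ in $\mathcal{O}_K/p\mathcal{O}_K$ is a unit. Then the multiplicative order of the image of $r$ in $(\mathcal{O}_K/p\mathcal{O}_K)^*$ equals the least common multiple, over $\sigma \in G$, of the multiplicative orders of the images of $\sigma(r)$ in $(\mathcal{O}_K/\wp)^*$. -/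
set_option maxHeartbeats 1000000
set_option synthInstance.maxHeartbeats 1000000

open NumberField

/-- A prime `p` of `R` splits completely in an `R`-algebra `S` (along `f : R →+* S`):
every maximal ideal of `S` lying over `p` has ramification index `1` and
residue field degree `1`. -/
def TotallySplit {R S : Type*} [CommRing R] [CommRing S] (f : R →+* S) (p : Ideal R) : Prop :=
  ∀ Q : Ideal S, Q.IsMaximal → Q.comap f = p →
    letI : Algebra R S := f.toAlgebra
    Ideal.ramificationIdx' p Q = 1 ∧ Ideal.inertiaDeg' p Q = 1

section Aux

variable (K : Type*) [Field K] [NumberField K] [IsGalois ℚ K]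
  (p : ℕ)

lemma aux_comap_eq (hp : p.Prime) (Q : Ideal (𝓞 K)) (hQ : Q.IsMaximal) (hpQ : (p : 𝓞 K) ∈ Q) :
    Q.comap (algebraMap ℤ (𝓞 K)) = Ideal.span {(p : ℤ)} := by
  have hprime : Prime ((p : ℕ) : ℤ) := Nat.prime_iff_prime_int.mp hp
  have hmax : (Ideal.span {((p : ℕ) : ℤ)}).IsMaximal :=
    PrincipalIdealRing.isMaximal_of_irreducible hprime.irreducible
  refine (hmax.eq_of_le ?_ ?_).symm
  · intro htop
    have h1 : (1 : ℤ) ∈ Q.comap (algebraMap ℤ (𝓞 K)) := htop ▸ Submodule.mem_top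
    have : (1 : 𝓞 K) ∈ Q := by simpa using (Ideal.mem_comap.mp h1)
    exact hQ.ne_top (Ideal.eq_top_iff_one _ |>.mpr this)
  · rw [Ideal.span_le, Set.singleton_subset_iff]
    show ((p : ℕ) : ℤ) ∈ Q.comap (algebraMap ℤ (𝓞 K))
    rw [Ideal.mem_comap, map_natCast]
    exact hpQ

variable (P : Ideal (𝓞 K))

lemma aux_exists_conj (hp : p.Prime) (hP : P.IsMaximal) (hPp : (p : 𝓞 K) ∈ P) (Q : Ideal (𝓞 K)) (hQ : Q.IsMaximal) (hpQ : (p : 𝓞 K) ∈ Q) :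
    ∃ σ : K ≃ₐ[ℚ] K, Q = Ideal.comap (galRestrict ℤ ℚ K (𝓞 K) σ) P := by
  classical
  by_contra hcon
  push_neg at hcon
  have hne_top : ∀ σ : K ≃ₐ[ℚ] K, Ideal.comap (galRestrict ℤ ℚ K (𝓞 K) σ) P ≠ ⊤ := by
    intro σ htop
    have h1 : (1 : 𝓞 K) ∈ Ideal.comap (galRestrict ℤ ℚ K (𝓞 K) σ) P := htop ▸ Submodule.mem_top
    rw [Ideal.mem_comap, map_one] at h1
    exact hP.ne_top (Ideal.eq_top_iff_one _ |>.mpr h1)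
  have hnle : ∀ σ : K ≃ₐ[ℚ] K, ¬ Q ≤ Ideal.comap (galRestrict ℤ ℚ K (𝓞 K) σ) P := by
    intro σ hle
    exact hcon σ (hQ.eq_of_le (hne_top σ) hle)
  have hsub : ¬ ((Q : Set (𝓞 K)) ⊆
      ⋃ σ ∈ ((Finset.univ : Finset (K ≃ₐ[ℚ] K)) : Set (K ≃ₐ[ℚ] K)),
        (Ideal.comap (galRestrict ℤ ℚ K (𝓞 K) σ) P : Set (𝓞 K))) := by
    rw [Ideal.subset_union_prime 1 1 (by haveI := hP.isPrime; exact fun i _ _ _ => Ideal.IsPrime.comap _)]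
    push_neg
    exact fun σ _ => hnle σ
  obtain ⟨x, hxQ, hxE⟩ := Set.not_subset.mp hsub
  have hxP : ∀ σ : K ≃ₐ[ℚ] K, galRestrict ℤ ℚ K (𝓞 K) σ x ∉ P := by
    intro σ hmem
    exact hxE (Set.mem_biUnion (by simp) (Ideal.mem_comap.mpr hmem))
  -- the norm of x
  set N : 𝓞 K := algebraMap ℤ (𝓞 K) (Algebra.norm ℤ x) with hN
  have hNeq : N = ∏ σ : K ≃ₐ[ℚ] K, galRestrict ℤ ℚ K (𝓞 K) σ x := by
    have hinj : Function.Injective (algebraMap (𝓞 K) K) :=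
      RingOfIntegers.coe_injective
    apply hinj
    rw [map_prod]
    have h1 : algebraMap (𝓞 K) K N = algebraMap ℚ K (Algebra.norm ℚ ((x : K))) := by
      rw [hN, ← IsScalarTower.algebraMap_apply ℤ (𝓞 K) K,
        IsScalarTower.algebraMap_apply ℤ ℚ K]
      congr 1
      rw [← Algebra.coe_norm_int]
      simp
    rw [h1, Algebra.norm_eq_prod_automorphisms]
    exact Finset.prod_congr rfl fun σ _ =>
      (algebraMap_galRestrict_apply ℤ σ x).symm
  have hNQ : N ∈ Q := by
    rw [hNeq, ← Finset.mul_prod_erase _ _ (Finset.mem_univ (1 : K ≃ₐ[ℚ] K))]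
    have h1 : galRestrict ℤ ℚ K (𝓞 K) (1 : K ≃ₐ[ℚ] K) x = x := by
      rw [map_one]; rfl
    rw [h1]
    exact Ideal.mul_mem_right _ _ hxQ
  have hmQ : Algebra.norm ℤ x ∈ Q.comap (algebraMap ℤ (𝓞 K)) := hNQ
  rw [aux_comap_eq K p hp Q hQ hpQ, Ideal.mem_span_singleton] at hmQ
  obtain ⟨k, hk⟩ := hmQ
  have hNP : N ∈ P := by
    rw [hN, hk, map_mul, map_natCast]
    exact Ideal.mul_mem_right _ _ hPp
  rw [hNeq] at hNP
  haveI := hP.isPrime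
  obtain ⟨σ, _, hσ⟩ := (Ideal.IsPrime.prod_mem_iff).mp hNP
  exact hxP σ hσ

lemma aux_key (hp : p.Prime) (hP : P.IsMaximal) (hPp : (p : 𝓞 K) ∈ P) (hsplit : TotallySplit (algebraMap ℤ (𝓞 K)) (Ideal.span {(p : ℤ)})) (x : 𝓞 K)
    (hx : ∀ σ : K ≃ₐ[ℚ] K, galRestrict ℤ ℚ K (𝓞 K) σ x ∈ P) :
    x ∈ Ideal.span {(p : 𝓞 K)} := by
  classical
  set I : Ideal (𝓞 K) := Ideal.span {(p : 𝓞 K)} with hI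
  have hp0 : ((p : ℕ) : 𝓞 K) ≠ 0 := Nat.cast_ne_zero.mpr hp.ne_zero
  have hne_bot : I ≠ ⊥ := by
    rw [hI, Ne, Ideal.span_singleton_eq_bot]
    exact hp0
  have hmap : Ideal.map (algebraMap ℤ (𝓞 K)) (Ideal.span {((p : ℕ) : ℤ)}) = I := by
    rw [Ideal.map_span, Set.image_singleton, map_natCast]
  -- facts about normalized factors
  have hQfacts : ∀ Q ∈ UniqueFactorizationMonoid.normalizedFactors I,
      Q.IsMaximal ∧ (p : 𝓞 K) ∈ Q := by
    intro Q hQ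
    have hQp : Prime Q := UniqueFactorizationMonoid.prime_of_normalized_factor Q hQ
    have hQpr : Q.IsPrime := Ideal.isPrime_of_prime hQp
    have hQ0 : Q ≠ ⊥ := hQp.ne_zero
    have hQmax : Q.IsMaximal := Ideal.IsPrime.isMaximal hQpr hQ0
    have hIQ : I ≤ Q :=
      Ideal.le_of_dvd (UniqueFactorizationMonoid.dvd_of_mem_normalizedFactors hQ)
    exact ⟨hQmax, hIQ (Ideal.mem_span_singleton_self _)⟩
  have hcount : ∀ Q ∈ UniqueFactorizationMonoid.normalizedFactors I,
      Multiset.count Q (UniqueFactorizationMonoid.normalizedFactors I) = 1 := by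
    intro Q hQ
    obtain ⟨hQmax, hpQ⟩ := hQfacts Q hQ
    have hQp : Prime Q := UniqueFactorizationMonoid.prime_of_normalized_factor Q hQ
    have hram := (hsplit Q hQmax (aux_comap_eq K p hp Q hQmax hpQ)).1
    have := Ideal.IsDedekindDomain.ramificationIdx'_eq_normalizedFactors_count
      (p := Ideal.span {((p : ℕ) : ℤ)}) (P := Q) (S := 𝓞 K)
      (by rw [hmap]; exact hne_bot) (Ideal.isPrime_of_prime hQp) hQp.ne_zero
    rw [hmap] at this
    exact this.symm.trans hram
  have hnodup : (UniqueFactorizationMonoid.normalizedFactors I).Nodup := by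
    rw [Multiset.nodup_iff_count_le_one]
    intro Q
    by_cases hQ : Q ∈ UniqueFactorizationMonoid.normalizedFactors I
    · exact le_of_eq (hcount Q hQ)
    · simp [Multiset.count_eq_zero_of_notMem hQ]
  have hprod : ((UniqueFactorizationMonoid.normalizedFactors I).toFinset.prod id) = I := by
    rw [Finset.prod_eq_multiset_prod]
    rw [Multiset.toFinset_val, Multiset.dedup_eq_self.mpr hnodup, Multiset.map_id]
    exact associated_iff_eq.mp (UniqueFactorizationMonoid.prod_normalizedFactors hne_bot)
  have hinf : ((UniqueFactorizationMonoid.normalizedFactors I).toFinset.inf id) = I := by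
    have h := IsDedekindDomain.inf_prime_pow_eq_prod
      (UniqueFactorizationMonoid.normalizedFactors I).toFinset id (fun _ => 1)
      (fun Q hQ => UniqueFactorizationMonoid.prime_of_normalized_factor Q
        (Multiset.mem_toFinset.mp hQ))
      (fun i _ j _ hij => hij)
    simp only [pow_one, id] at h
    exact h.trans hprod
  rw [← hinf]
  rw [Submodule.mem_finsetInf]
  intro Q hQ
  obtain ⟨hQmax, hpQ⟩ := hQfacts Q (Multiset.mem_toFinset.mp hQ)
  obtain ⟨σ, rfl⟩ := aux_exists_conj K p P hp hP hPp Q hQmax hpQ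
  exact Ideal.mem_comap.mpr (hx σ)

end Aux

set_option synthInstance.maxHeartbeats 1000000 in
/-- Let `K/ℚ` be Galois with group `G`, let `p` be a rational prime that splits
completely in `K`, let `℘` be a maximal ideal of `𝓞 K` above `p` and `r ∈ 𝓞 K` a unit
modulo `p`.  Then the multiplicative order of `r` in `(𝓞 K/p𝓞 K)^*` is the l.c.m. over
`σ ∈ G` of the multiplicative orders of the `σ(r)` in `(𝓞 K/℘)^*`. -/
theorem stmt7 (K : Type*) [Field K] [NumberField K] [IsGalois ℚ K]
    (p : ℕ) (hp : p.Prime)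
    (hsplit : TotallySplit (algebraMap ℤ (𝓞 K)) (Ideal.span {(p : ℤ)}))
    (P : Ideal (𝓞 K)) (hP : P.IsMaximal) (hPp : (p : 𝓞 K) ∈ P)
    (r : 𝓞 K) (hr : IsUnit (Ideal.Quotient.mk (Ideal.span {(p : 𝓞 K)}) r)) :
    orderOf (Ideal.Quotient.mk (Ideal.span {(p : 𝓞 K)}) r) =
      Finset.univ.lcm (fun σ : K ≃ₐ[ℚ] K =>
        orderOf (Ideal.Quotient.mk P (galRestrict ℤ ℚ K (𝓞 K) σ r))) := by
  set I : Ideal (𝓞 K) := Ideal.span {(p : 𝓞 K)} with hI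
  set a := Ideal.Quotient.mk I r with ha
  set b : (K ≃ₐ[ℚ] K) → (𝓞 K) ⧸ P :=
    fun σ => Ideal.Quotient.mk P (galRestrict ℤ ℚ K (𝓞 K) σ r) with hb
  apply Nat.dvd_antisymm
  · -- orderOf a ∣ lcm
    rw [orderOf_dvd_iff_pow_eq_one]
    set L := Finset.univ.lcm (fun σ : K ≃ₐ[ℚ] K => orderOf (b σ)) with hL
    have hx : ∀ σ : K ≃ₐ[ℚ] K, galRestrict ℤ ℚ K (𝓞 K) σ (r ^ L - 1) ∈ P := by
      intro σ
      have hdvd : orderOf (b σ) ∣ L := Finset.dvd_lcm (Finset.mem_univ σ)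
      have h1 : (b σ) ^ L = 1 := orderOf_dvd_iff_pow_eq_one.mp hdvd
      rw [hb] at h1
      rw [← map_pow] at h1
      have := Ideal.Quotient.eq.mp (h1.trans (map_one _).symm)
      rw [map_sub, map_pow, map_one]
      exact this
    have := aux_key K p P hp hP hPp hsplit (r ^ L - 1) hx
    rw [ha, ← map_pow]
    have : Ideal.Quotient.mk I (r ^ L) = Ideal.Quotient.mk I 1 := Ideal.Quotient.eq.mpr this
    rw [this, map_one]
  · -- lcm ∣ orderOf a
    apply Finset.lcm_dvd
    intro σ _
    rw [orderOf_dvd_iff_pow_eq_one]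
    set d := orderOf a with hd
    have h1 : a ^ d = 1 := pow_orderOf_eq_one a
    rw [ha, ← map_pow] at h1
    have hmem : r ^ d - 1 ∈ I := by
      have := Ideal.Quotient.eq.mp (h1.trans (map_one _).symm)
      simpa using this
    rw [hI, Ideal.mem_span_singleton] at hmem
    obtain ⟨c, hc⟩ := hmem
    have hmem' : (galRestrict ℤ ℚ K (𝓞 K) σ r) ^ d - 1 ∈ P := by
      have : galRestrict ℤ ℚ K (𝓞 K) σ (r ^ d - 1) =
          (galRestrict ℤ ℚ K (𝓞 K) σ r) ^ d - 1 := by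
        rw [map_sub, map_pow, map_one]
      rw [← this, hc, map_mul, map_natCast]
      exact Ideal.mul_mem_right _ _ hPp
    show (Ideal.Quotient.mk P (galRestrict ℤ ℚ K (𝓞 K) σ r)) ^ d = 1
    rw [← map_pow]
    have : Ideal.Quotient.mk P ((galRestrict ℤ ℚ K (𝓞 K) σ r) ^ d) = Ideal.Quotient.mk P 1 :=
      Ideal.Quotient.eq.mpr (by simpa using hmem')
    rw [this, map_one]
end

section
/- Let $G$ be a group, let $H$ be a normal subgroup of $G$, let $F$ be an algebraically closed field, and let $V$ be a nonzero finite-dimensional $F$-vector space. Let $\rho_1, \rho_2 : G \to GL(V)$ be group homomorphisms such that $\rho_1(h) = \rho_2(h)$ for all $h \in H$ and such that the restriction of $\rho_1$ to $H$ is irreducible (i.e. $V$ has no $F$-subspace other than $0$ and $V$ stable under all $\rho_1(h)$, $h \in H$). Then there exists a group homomorphism $\chi : G \to F^{\times}$ with $\chi(h) = 1$ for all $h \in H$ and $\rho_2(g) = \chi(g) \cdot \rho_1(g)$ for all $g \in G$. -/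
/-- An extension to `G` of an irreducible representation of a normal subgroup `H` is
unique up to twisting by characters of `G/H`: if `ρ₁, ρ₂ : G → GL(V)` agree on a
normal subgroup `H` and `ρ₁|_H` is irreducible (over an algebraically closed field
`F`, with `V` a nonzero finite-dimensional `F`-vector space), then `ρ₂ = χ ⋅ ρ₁` for a
character `χ : G → Fˣ` trivial on `H`. -/
theorem stmt11 (G : Type*) [Group G] (H : Subgroup G) [H.Normal]
    (F : Type*) [Field F] [IsAlgClosed F]
    (V : Type*) [AddCommGroup V] [Module F V] [FiniteDimensional F V] [Nontrivial V]
    (ρ₁ ρ₂ : G →* (V →ₗ[F] V)ˣ)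
    (hagree : ∀ h ∈ H, ρ₁ h = ρ₂ h)
    (hirr : ∀ W : Submodule F V, (∀ h ∈ H, ∀ v ∈ W, (ρ₁ h : V →ₗ[F] V) v ∈ W) →
      W = ⊥ ∨ W = ⊤) :
    ∃ χ : G →* Fˣ, (∀ h ∈ H, χ h = 1) ∧
      ∀ g : G, (ρ₂ g : V →ₗ[F] V) = (χ g : F) • (ρ₁ g : V →ₗ[F] V) := by
  classical
  -- The twisting operator
  set T : G → (V →ₗ[F] V)ˣ := fun g => ρ₂ g * (ρ₁ g)⁻¹ with hT
  -- T g commutes with ρ₁ h for h ∈ H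
  have hcomm : ∀ g : G, ∀ h ∈ H, T g * ρ₁ h = ρ₁ h * T g := by
    intro g h hh
    have hmem : g⁻¹ * h * g ∈ H := Subgroup.Normal.conj_mem' ‹H.Normal› h hh g
    have h1 : (ρ₁ g)⁻¹ * ρ₁ h = ρ₁ (g⁻¹ * h * g) * (ρ₁ g)⁻¹ := by
      rw [map_mul, map_mul, map_inv]
      group
    have h2 : ρ₂ g * ρ₁ (g⁻¹ * h * g) = ρ₁ h * ρ₂ g := by
      rw [hagree _ hmem, ← map_mul]
      have : g * (g⁻¹ * h * g) = h * g := by group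
      rw [this, map_mul, hagree _ hh]
    calc T g * ρ₁ h = ρ₂ g * ((ρ₁ g)⁻¹ * ρ₁ h) := by rw [hT]; group
      _ = ρ₂ g * ρ₁ (g⁻¹ * h * g) * (ρ₁ g)⁻¹ := by rw [h1]; group
      _ = ρ₁ h * (ρ₂ g * (ρ₁ g)⁻¹) := by rw [h2]; group
      _ = ρ₁ h * T g := by rw [hT]
  -- Schur: T g is scalar
  have hscalar : ∀ g : G, ∃ c : F, ∀ v : V, (T g : V →ₗ[F] V) v = c • v := by
    intro g
    obtain ⟨c, hc⟩ := Module.End.exists_eigenvalue ((T g : V →ₗ[F] V) : Module.End F V)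
    refine ⟨c, ?_⟩
    have hstab : ∀ h ∈ H, ∀ v ∈ Module.End.eigenspace ((T g : V →ₗ[F] V)) c,
        (ρ₁ h : V →ₗ[F] V) v ∈ Module.End.eigenspace ((T g : V →ₗ[F] V)) c := by
      intro h hh v hv
      rw [Module.End.mem_eigenspace_iff] at hv ⊢
      have h' : (T g : V →ₗ[F] V) * (ρ₁ h : V →ₗ[F] V)
          = (ρ₁ h : V →ₗ[F] V) * (T g : V →ₗ[F] V) := by
        rw [← Units.val_mul, ← Units.val_mul, hcomm g h hh]
      calc (T g : V →ₗ[F] V) ((ρ₁ h : V →ₗ[F] V) v)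
          = ((T g : V →ₗ[F] V) * (ρ₁ h : V →ₗ[F] V)) v := rfl
        _ = ((ρ₁ h : V →ₗ[F] V) * (T g : V →ₗ[F] V)) v := by rw [h']
        _ = (ρ₁ h : V →ₗ[F] V) ((T g : V →ₗ[F] V) v) := rfl
        _ = (ρ₁ h : V →ₗ[F] V) (c • v) := by rw [hv]
        _ = c • (ρ₁ h : V →ₗ[F] V) v := map_smul _ _ _
    have := hirr _ hstab
    rcases this with hbot | htop
    · exact absurd hbot hc
    · intro v
      have hv : v ∈ Module.End.eigenspace ((T g : V →ₗ[F] V)) c := htop ▸ Submodule.mem_top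
      exact Module.End.mem_eigenspace_iff.mp hv
  choose c hc using hscalar
  obtain ⟨v₀, hv₀⟩ := exists_ne (0 : V)
  -- ρ₂ g = c g • ρ₁ g
  have hρ : ∀ g : G, ∀ v : V, (ρ₂ g : V →ₗ[F] V) v = c g • (ρ₁ g : V →ₗ[F] V) v := by
    intro g v
    have key : (ρ₂ g : V →ₗ[F] V) v = (T g : V →ₗ[F] V) ((ρ₁ g : V →ₗ[F] V) v) := by
      have h0 : T g * ρ₁ g = ρ₂ g := by simp only [hT]; group
      rw [← h0, Units.val_mul]; rfl
    rw [key, hc]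
  -- units are injective
  have hker : ∀ u : (V →ₗ[F] V)ˣ, ∀ v : V, (u : V →ₗ[F] V) v = 0 → v = 0 := by
    intro u v hv
    have h1 : ((u⁻¹ : (V →ₗ[F] V)ˣ) : V →ₗ[F] V) ((u : V →ₗ[F] V) v) = v := by
      have h2 : (((u⁻¹ : (V →ₗ[F] V)ˣ) * u : (V →ₗ[F] V)ˣ) : V →ₗ[F] V) v = v := by
        rw [inv_mul_cancel]; rfl
      rw [Units.val_mul] at h2
      exact h2
    rw [hv, map_zero] at h1
    exact h1.symm
  -- scalar uniqueness
  have huniq : ∀ g : G, ∀ a b : F,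
      a • (ρ₁ g : V →ₗ[F] V) v₀ = b • (ρ₁ g : V →ₗ[F] V) v₀ → a = b := by
    intro g a b hab
    have hw : (ρ₁ g : V →ₗ[F] V) v₀ ≠ 0 := fun h => hv₀ (hker (ρ₁ g) v₀ h)
    have : (a - b) • (ρ₁ g : V →ₗ[F] V) v₀ = 0 := by rw [sub_smul, hab, sub_self]
    rcases smul_eq_zero.mp this with h | h
    · exact sub_eq_zero.mp h
    · exact absurd h hw
  -- ρ₁(g g') v₀ = ρ₁ g (ρ₁ g' v₀)
  have hmul : ∀ g g' : G, (ρ₁ (g * g') : V →ₗ[F] V) v₀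
      = (ρ₁ g : V →ₗ[F] V) ((ρ₁ g' : V →ₗ[F] V) v₀) := by
    intro g g'
    rw [map_mul, Units.val_mul]
    rfl
  -- c g ≠ 0
  have hne : ∀ g : G, c g ≠ 0 := by
    intro g hg
    have h1 := hρ g v₀
    rw [hg, zero_smul] at h1
    exact hv₀ (hker (ρ₂ g) v₀ h1)
  -- c 1 = 1
  have hone : c 1 = 1 := by
    apply huniq 1
    have h1 := hρ 1 v₀
    simp only [map_one, Units.val_one, Module.End.one_apply] at h1 ⊢
    rw [one_smul]
    exact h1.symm
  -- multiplicativity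
  have hmulc : ∀ g g' : G, c (g * g') = c g * c g' := by
    intro g g'
    apply huniq (g * g')
    have h1 := hρ (g * g') v₀
    have h2 : (ρ₂ (g * g') : V →ₗ[F] V) v₀
        = (c g * c g') • (ρ₁ (g * g') : V →ₗ[F] V) v₀ := by
      calc (ρ₂ (g * g') : V →ₗ[F] V) v₀
          = (ρ₂ g : V →ₗ[F] V) ((ρ₂ g' : V →ₗ[F] V) v₀) := by
            rw [map_mul, Units.val_mul]; rfl
        _ = (ρ₂ g : V →ₗ[F] V) (c g' • (ρ₁ g' : V →ₗ[F] V) v₀) := by rw [hρ g']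
        _ = c g' • (ρ₂ g : V →ₗ[F] V) ((ρ₁ g' : V →ₗ[F] V) v₀) := map_smul _ _ _
        _ = c g' • (c g • (ρ₁ g : V →ₗ[F] V) ((ρ₁ g' : V →ₗ[F] V) v₀)) := by rw [hρ g]
        _ = (c g * c g') • (ρ₁ (g * g') : V →ₗ[F] V) v₀ := by
            rw [smul_smul, mul_comm, hmul]
    rw [← h1, h2]
  refine ⟨{ toFun := fun g => Units.mk0 (c g) (hne g),
            map_one' := by ext; simp [hone],
            map_mul' := by intro g g'; ext; simp [hmulc] }, ?_, ?_⟩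
  · intro h hh
    ext
    simp only [Units.mk0, Units.val_one]
    apply huniq h
    have h1 := hρ h v₀
    rw [← hagree h hh] at h1
    rw [one_smul]
    exact h1.symm
  · intro g
    ext v
    simp only [LinearMap.smul_apply]
    exact hρ g v
end
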